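/- Let H = (V,H) be a boolean representable simplicial complex, τ ⊆ η an equivalence relation with projection φ, and H/τ the quotient complex. For X ⊆ V: X is a facet of H if and only if φ restricted to X is injective and Xφ is a facet of H/τ. -/

import Mathlib

open scoped Classical

variable {V : Type}

def IsSC (faces : Set (Finset V)) : Prop :=
  (∀ v : V, ({v} : Finset V) ∈ faces) ∧
    ∀ ⦃X Y : Finset V⦄, X ∈ faces → Y ⊆ X → Y ∈ faces

def IsFlat (faces : Set (Finset V)) (F : Set V) : Prop :=
  ∀ I ∈ faces, (I : Set V) ⊆ F → ∀ p ∉ F, insert p I ∈ faces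

def cl (faces : Set (Finset V)) (X : Set V) : Set V :=
  ⋂₀ {F : Set V | IsFlat faces F ∧ X ⊆ F}

def BRep (faces : Set (Finset V)) : Prop :=
  ∀ X ∈ faces, ∃ (k : ℕ) (F : Fin (k + 1) → Set V) (x : Fin k → V),
    (∀ i, IsFlat faces (F i)) ∧ StrictMono F ∧ Function.Injective x ∧
    (∀ i : Fin k, x i ∈ F i.succ \ F i.castSucc) ∧
    X = Finset.image x Finset.univ

def skel (faces : Set (Finset V)) : SimpleGraph V where
  Adj p q := p ≠ q ∧ ({p, q} : Finset V) ∈ faces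
  symm := by
    constructor
    rintro p q ⟨h1, h2⟩
    exact ⟨h1.symm, by rwa [Finset.pair_comm]⟩
  loopless := by constructor; rintro p ⟨h, _⟩; exact h rfl

def flatGraph (faces : Set (Finset V)) : SimpleGraph V where
  Adj p q := p ≠ q ∧ cl faces {p, q} ≠ Set.univ
  symm := by
    constructor
    rintro p q ⟨h1, h2⟩
    exact ⟨h1.symm, by rwa [Set.pair_comm]⟩
  loopless := by constructor; rintro p ⟨h, _⟩; exact h rfl

def quotFaces (faces : Set (Finset V)) (τ : Setoid V) :
    Set (Finset (Quotient τ)) :=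
  {Y | ∃ X ∈ faces, Y = X.image (Quotient.mk τ)}
def IsFacet {W : Type} (faces : Set (Finset W)) (X : Finset W) : Prop :=
  X ∈ faces ∧ ∀ Y ∈ faces, X ⊆ Y → X = Y

/-!
Boolean representability makes the closure of a singleton a complete invariant of vertices
within a face, and makes membership in the complex depend only on these closures: a face is
the transversal of a chain of flats, and a vertex lies in a flat iff its closure does, so each
vertex may be swapped for one with the same closure. Hence φ is injective on faces and every
face of `H/τ` containing `Xφ` lifts to a face of `H` containing `X`; the theorem follows by
counting.
-/

section Closure

variable {faces : Set (Finset V)}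

lemma subset_cl (X : Set V) : X ⊆ cl faces X :=
  fun _ ha _ hF => hF.2 ha

lemma cl_subset {X F : Set V} (hF : IsFlat faces F) (hXF : X ⊆ F) : cl faces X ⊆ F :=
  Set.sInter_subset_of_mem ⟨hF, hXF⟩

lemma IsFlat.mem_iff_cl_singleton_subset {F : Set V} (hF : IsFlat faces F) (a : V) :
    a ∈ F ↔ cl faces {a} ⊆ F :=
  ⟨fun ha => cl_subset hF (Set.singleton_subset_iff.2 ha),
    fun h => h (subset_cl {a} rfl)⟩

lemma IsFlat.mem_congr {F : Set V} (hF : IsFlat faces F) {a b : V}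
    (h : cl faces {a} = cl faces {b}) : a ∈ F ↔ b ∈ F := by
  rw [hF.mem_iff_cl_singleton_subset, hF.mem_iff_cl_singleton_subset, h]

end Closure

section Chain

variable {faces : Set (Finset V)} {k : ℕ} {F : Fin (k + 1) → Set V} {x : Fin k → V}

lemma mem_castSucc_of_lt (hmono : Monotone F) (hx : ∀ i, x i ∈ F i.succ \ F i.castSucc)
    {i j : Fin k} (hij : i < j) : x i ∈ F j.castSucc :=
  hmono (Fin.succ_le_castSucc_iff.2 hij) (hx i).1

lemma image_mem_of_isFlat_chain (hempty : ∅ ∈ faces) (hF : ∀ i, IsFlat faces (F i))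
    (hmono : Monotone F) (hx : ∀ i, x i ∈ F i.succ \ F i.castSucc) (s : Finset (Fin k)) :
    s.image x ∈ faces := by
  induction s using Finset.induction_on_max with
  | empty => simpa using hempty
  | insert a s hlt ih =>
    rw [Finset.image_insert]
    refine hF a.castSucc _ ih ?_ _ (hx a).2
    intro v hv
    obtain ⟨b, hb, rfl⟩ := Finset.mem_image.1 hv
    exact mem_castSucc_of_lt hmono hx (hlt b hb)

lemma cl_singleton_ne_of_lt (hF : ∀ i, IsFlat faces (F i)) (hmono : Monotone F)
    (hx : ∀ i, x i ∈ F i.succ \ F i.castSucc) {i j : Fin k} (hij : i < j) :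
    cl faces {x i} ≠ cl faces {x j} := fun h =>
  (hx j).2 (((hF j.castSucc).mem_congr h).1 (mem_castSucc_of_lt hmono hx hij))

end Chain

section BRep

variable {faces : Set (Finset V)}

lemma image_mem_of_cl_singleton_eq (hbr : BRep faces) {X : Finset V} (hX : X ∈ faces)
    (hempty : ∅ ∈ faces) (g : V → V) (hg : ∀ v ∈ X, cl faces {g v} = cl faces {v}) :
    X.image g ∈ faces := by
  obtain ⟨k, F, x, hF, hmono, -, hx, rfl⟩ := hbr X hX
  rw [Finset.image_image]
  refine image_mem_of_isFlat_chain hempty hF hmono.monotone (fun i => ?_) _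
  have hgx := hg (x i) (Finset.mem_image_of_mem x (Finset.mem_univ i))
  exact ⟨((hF _).mem_congr hgx).2 (hx i).1, fun h => (hx i).2 (((hF _).mem_congr hgx).1 h)⟩

lemma eq_of_cl_singleton_eq (hbr : BRep faces) {X : Finset V} (hX : X ∈ faces)
    {a b : V} (ha : a ∈ X) (hb : b ∈ X) (hab : cl faces {a} = cl faces {b}) : a = b := by
  obtain ⟨k, F, x, hF, hmono, -, hx, rfl⟩ := hbr X hX
  obtain ⟨i, -, rfl⟩ := Finset.mem_image.1 ha
  obtain ⟨j, -, rfl⟩ := Finset.mem_image.1 hb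
  rcases lt_trichotomy i j with h | rfl | h
  · exact absurd hab (cl_singleton_ne_of_lt hF hmono.monotone hx h)
  · rfl
  · exact absurd hab.symm (cl_singleton_ne_of_lt hF hmono.monotone hx h)

variable {τ : Setoid V} (hτ : ∀ a b : V, τ.r a b → cl faces {a} = cl faces {b})
include hτ

lemma injOn_quotient_mk_of_mem (hbr : BRep faces) {Y : Finset V} (hY : Y ∈ faces) :
    Set.InjOn (Quotient.mk τ) (Y : Set V) := fun a ha b hb hab =>
  eq_of_cl_singleton_eq hbr hY ha hb (hτ a b (Quotient.exact hab))

lemma eq_of_subset_of_image_quotient_mk_eq (hbr : BRep faces) {X Y : Finset V}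
    (hY : Y ∈ faces) (hXY : X ⊆ Y) (h : X.image (Quotient.mk τ) = Y.image (Quotient.mk τ)) :
    X = Y := by
  have hinj := injOn_quotient_mk_of_mem hτ hbr hY
  refine Finset.eq_of_subset_of_card_le hXY ?_
  rw [← Finset.card_image_of_injOn hinj, ← h,
    Finset.card_image_of_injOn (hinj.mono (Finset.coe_subset.2 hXY))]

lemma exists_mem_superset_image_quotient_mk_eq (hsc : IsSC faces) (hbr : BRep faces)
    {X Z : Finset V} (hX : Set.InjOn (Quotient.mk τ) (X : Set V)) (hZ : Z ∈ faces)
    (hXZ : X.image (Quotient.mk τ) ⊆ Z.image (Quotient.mk τ)) :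
    ∃ W ∈ faces, X ⊆ W ∧ W.image (Quotient.mk τ) = Z.image (Quotient.mk τ) := by
  -- `g` moves each vertex of `Z` to its `τ`-representative in `X`, if there is one.
  let g : V → V := fun z =>
    if h : ∃ a ∈ X, Quotient.mk τ a = Quotient.mk τ z then h.choose else z
  have hg : ∀ z, Quotient.mk τ (g z) = Quotient.mk τ z := by
    intro z
    by_cases h : ∃ a ∈ X, Quotient.mk τ a = Quotient.mk τ z
    · simp only [g, dif_pos h, h.choose_spec.2]
    · simp only [g, dif_neg h]
  refine ⟨Z.image g, image_mem_of_cl_singleton_eq hbr hZ (hsc.2 hZ (Finset.empty_subset Z)) g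
    (fun z _ => hτ _ _ (Quotient.exact (hg z))), fun a ha => ?_, ?_⟩
  · obtain ⟨z, hz, hza⟩ := Finset.mem_image.1 (hXZ (Finset.mem_image_of_mem _ ha))
    have h : ∃ b ∈ X, Quotient.mk τ b = Quotient.mk τ z := ⟨a, ha, hza.symm⟩
    have hgz : g z = a := by
      simp only [g, dif_pos h]
      exact hX h.choose_spec.1 ha (h.choose_spec.2.trans hza)
    exact Finset.mem_image.2 ⟨z, hz, hgz⟩
  · rw [Finset.image_image]
    exact Finset.image_congr fun z _ => hg z

end BRep

theorem facet_iff_quot_facet_general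
    {faces : Set (Finset V)} (hsc : IsSC faces) (hbr : BRep faces)
    (τ : Setoid V) (hτ : ∀ a b : V, τ.r a b → cl faces {a} = cl faces {b})
    (X : Finset V) :
    IsFacet faces X ↔
      (Set.InjOn (Quotient.mk τ) (X : Set V) ∧
        IsFacet (quotFaces faces τ) (X.image (Quotient.mk τ))) := by
  constructor
  · rintro ⟨hX, hXmax⟩
    have hinj := injOn_quotient_mk_of_mem hτ hbr hX
    refine ⟨hinj, ⟨X, hX, rfl⟩, ?_⟩
    rintro _ ⟨Z, hZ, rfl⟩ hXZ
    obtain ⟨W, hW, hXW, hWZ⟩ := exists_mem_superset_image_quotient_mk_eq hτ hsc hbr hinj hZ hXZ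
    rw [← hWZ, ← hXmax W hW hXW]
  · rintro ⟨hinj, ⟨Z, hZ, hXZ⟩, hXmax⟩
    obtain ⟨W, hW, hXW, hWZ⟩ :=
      exists_mem_superset_image_quotient_mk_eq hτ hsc hbr hinj hZ hXZ.le
    have hX : X ∈ faces := by
      rwa [eq_of_subset_of_image_quotient_mk_eq hτ hbr hW hXW (hWZ.trans hXZ.symm).symm]
    exact ⟨hX, fun Y hY hXY => eq_of_subset_of_image_quotient_mk_eq hτ hbr hY hXY
      (hXmax _ ⟨Y, hY, rfl⟩ (Finset.image_subset_image hXY))⟩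

theorem facet_iff_quot_facet [Fintype V] [Nonempty V]
    {faces : Set (Finset V)} (hsc : IsSC faces) (hbr : BRep faces)
    (τ : Setoid V) (hτ : ∀ a b : V, τ.r a b → cl faces {a} = cl faces {b})
    (X : Finset V) :
    IsFacet faces X ↔
      (Set.InjOn (Quotient.mk τ) (X : Set V) ∧
        IsFacet (quotFaces faces τ) (X.image (Quotient.mk τ))) :=
  facet_iff_quot_facet_general hsc hbr τ hτ X
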